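/- arXiv:1303.2579 — 3 statements merged into one kernel-verified Lean document; each statement's English description precedes it below -/
import Mathlib

section
/- Let P and Q be probability mass functions on a finite set 𝒳 with Supp(P) ⊆ Supp(Q), and let ε ∈ [0,1). Then there exists a minimizer φ ∈ B^ε(P) attaining D^ε_∞(P||Q) = log max_{x : P(x)>0} φ(x)/Q(x) whose support equals the support of P, i.e., Supp(φ) = Supp(P). -/
/-!
The feasible set `B^ε(P)` is a compact box cut by a closed half-space, and the objective
`φ ↦ max_{x ∈ Supp P} φ(x)/Q(x)` is a finite maximum of continuous functions, so a minimizer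
`φ₀` exists. Its value `M` is positive because `∑ φ₀ ≥ 1 - ε > 0`. Raising `φ₀` pointwise to
`max φ₀ (min P (M • Q))` keeps it feasible, does not increase any ratio beyond `M`, and makes
it positive exactly on `Supp P`.
-/

open scoped Classical BigOperators

/-- `maxRatio P φ Q = max_{x : P(x) > 0} φ(x)/Q(x)`. -/
noncomputable def maxRatio {α : Type*} [Fintype α] (P φ Q : α → ℝ) : ℝ :=
  sSup ((fun x => φ x / Q x) '' {x | 0 < P x})

/-- The smooth max Rényi divergence
`D^ε_∞(P‖Q) = log₂ inf_{φ ∈ B^ε(P)} max_{x : P(x) > 0} φ(x)/Q(x)`. -/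
noncomputable def Dsm {α : Type*} [Fintype α] (ε : ℝ) (P Q : α → ℝ) : ℝ :=
  Real.logb 2 (sInf {r : ℝ | ∃ φ : α → ℝ,
    (∀ x, 0 ≤ φ x ∧ φ x ≤ P x) ∧ 1 - ε ≤ ∑ x, φ x ∧ r = maxRatio P φ Q})

open Finset

section

variable {α : Type*} [Fintype α]

/-- `B^ε(P)`. -/
def smoothBall (ε : ℝ) (P : α → ℝ) : Set (α → ℝ) :=
  {φ | (∀ x, 0 ≤ φ x ∧ φ x ≤ P x) ∧ 1 - ε ≤ ∑ x, φ x}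

lemma self_mem_smoothBall {ε : ℝ} {P : α → ℝ} (hP0 : ∀ x, 0 ≤ P x) (hP1 : ∑ x, P x = 1)
    (hε0 : 0 ≤ ε) : P ∈ smoothBall ε P :=
  ⟨fun x => ⟨hP0 x, le_rfl⟩, by linarith⟩

lemma isCompact_smoothBall (ε : ℝ) (P : α → ℝ) : IsCompact (smoothBall ε P) := by
  have hbox : IsClosed {φ : α → ℝ | ∀ x, 0 ≤ φ x ∧ φ x ≤ P x} := by
    simp only [Set.ofPred_forall]
    exact isClosed_iInter fun x =>
      (isClosed_le continuous_const (continuous_apply x)).inter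
        (isClosed_le (continuous_apply x) continuous_const)
  have hsum : IsClosed {φ : α → ℝ | 1 - ε ≤ ∑ x, φ x} :=
    isClosed_le continuous_const (continuous_finsetSum _ fun x _ => continuous_apply x)
  exact (isCompact_univ_pi fun x => isCompact_Icc (a := 0) (b := P x)).of_isClosed_subset
    (hbox.inter hsum) fun φ hφ x _ => hφ.1 x

lemma Dsm_eq_logb_sInf_image (ε : ℝ) (P Q : α → ℝ) :
    Dsm ε P Q = Real.logb 2 (sInf ((maxRatio P · Q) '' smoothBall ε P)) := by
  simp only [Dsm, smoothBall, Set.image, Set.mem_ofPred_eq, eq_comm, and_assoc]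

lemma Dsm_eq_logb_maxRatio_of_isMinOn {ε : ℝ} {P Q φ : α → ℝ} (hφ : φ ∈ smoothBall ε P)
    (hmin : IsMinOn (maxRatio P · Q) (smoothBall ε P) φ) :
    Dsm ε P Q = Real.logb 2 (maxRatio P φ Q) := by
  rw [Dsm_eq_logb_sInf_image]
  exact congrArg _ (IsLeast.csInf_eq ⟨Set.mem_image_of_mem _ hφ,
    Set.forall_mem_image.2 fun ψ hψ => hmin hψ⟩)

section maxRatio

variable {P : α → ℝ} (hP : ∃ x, 0 < P x)
include hP

lemma maxRatio_eq_sup' (φ Q : α → ℝ) :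
    maxRatio P φ Q =
      (univ.filter (0 < P ·)).sup' (by simpa [Finset.Nonempty] using hP) (fun x => φ x / Q x) := by
  rw [maxRatio, sup'_eq_csSup_image, coe_filter]
  simp

lemma continuous_maxRatio (Q : α → ℝ) : Continuous (maxRatio P · Q) := by
  simp only [maxRatio_eq_sup' hP]
  exact Continuous.finset_sup'_apply _ fun x _ => (continuous_apply x).div_const _

lemma div_le_maxRatio (φ Q : α → ℝ) {x : α} (hx : 0 < P x) :
    φ x / Q x ≤ maxRatio P φ Q := by
  rw [maxRatio_eq_sup' hP]
  exact le_sup' (fun x => φ x / Q x) (by simpa using hx)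

lemma maxRatio_le {φ Q : α → ℝ} {r : ℝ} (h : ∀ x, 0 < P x → φ x / Q x ≤ r) :
    maxRatio P φ Q ≤ r := by
  rw [maxRatio_eq_sup' hP]
  exact sup'_le _ _ fun x hx => h x (by simpa using hx)

end maxRatio

lemma exists_pos_of_mem_smoothBall {ε : ℝ} {P φ : α → ℝ} (hε1 : ε < 1)
    (hφ : φ ∈ smoothBall ε P) : ∃ x, 0 < φ x := by
  obtain ⟨x, -, hx⟩ := exists_lt_of_sum_lt (s := univ) (f := 0) (g := φ) <| by
    simp only [Pi.zero_apply, sum_const_zero]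
    linarith [hφ.2]
  exact ⟨x, hx⟩

lemma maxRatio_pos {ε : ℝ} {P Q φ : α → ℝ} (hsupp : ∀ x, 0 < P x → 0 < Q x) (hε1 : ε < 1)
    (hφ : φ ∈ smoothBall ε P) : 0 < maxRatio P φ Q := by
  obtain ⟨y, hy⟩ := exists_pos_of_mem_smoothBall hε1 hφ
  have hPy : 0 < P y := hy.trans_le (hφ.1 y).2
  exact (div_pos hy (hsupp y hPy)).trans_le (div_le_maxRatio ⟨y, hPy⟩ φ Q hPy)

def raiseToRatio (P Q φ : α → ℝ) (M : ℝ) : α → ℝ :=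
  fun x => max (φ x) (min (P x) (M * Q x))

section raiseToRatio

variable {ε M : ℝ} {P Q φ : α → ℝ}

lemma raiseToRatio_mem_smoothBall (hφ : φ ∈ smoothBall ε P) :
    raiseToRatio P Q φ M ∈ smoothBall ε P :=
  ⟨fun x => ⟨(hφ.1 x).1.trans (le_max_left _ _), max_le (hφ.1 x).2 (min_le_left _ _)⟩,
    hφ.2.trans (sum_le_sum fun _ _ => le_max_left _ _)⟩

lemma raiseToRatio_pos_iff (hsupp : ∀ x, 0 < P x → 0 < Q x) (hM : 0 < M)
    (hφ : φ ∈ smoothBall ε P) (x : α) : 0 < raiseToRatio P Q φ M x ↔ 0 < P x :=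
  ⟨fun h => h.trans_le ((raiseToRatio_mem_smoothBall (M := M) (Q := Q) hφ).1 x).2,
    fun h => (lt_min h (mul_pos hM (hsupp x h))).trans_le (le_max_right _ _)⟩

lemma maxRatio_raiseToRatio (hsupp : ∀ x, 0 < P x → 0 < Q x) (hP : ∃ x, 0 < P x) :
    maxRatio P (raiseToRatio P Q φ (maxRatio P φ Q)) Q = maxRatio P φ Q := by
  refine le_antisymm (maxRatio_le hP fun x hx => ?_) (maxRatio_le hP fun x hx => ?_)
  · have hQx := hsupp x hx
    rw [div_le_iff₀ hQx]
    exact max_le ((div_le_iff₀ hQx).1 (div_le_maxRatio hP φ Q hx)) (min_le_right _ _)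
  · calc φ x / Q x ≤ raiseToRatio P Q φ (maxRatio P φ Q) x / Q x :=
          div_le_div_of_nonneg_right (le_max_left _ _) (hsupp x hx).le
      _ ≤ _ := div_le_maxRatio hP _ Q hx

end raiseToRatio

end

theorem smooth_max_divergence_attained_full_support_general
    {α : Type*} [Fintype α]
    (P Q : α → ℝ)
    (hP0 : ∀ x, 0 ≤ P x) (hP1 : ∑ x, P x = 1)
    (hsupp : ∀ x, 0 < P x → 0 < Q x)
    (ε : ℝ) (hε0 : 0 ≤ ε) (hε1 : ε < 1) :
    ∃ φ : α → ℝ, (∀ x, 0 ≤ φ x ∧ φ x ≤ P x) ∧ 1 - ε ≤ ∑ x, φ x ∧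
      Dsm ε P Q = Real.logb 2 (maxRatio P φ Q) ∧
      (∀ x, 0 < φ x ↔ 0 < P x) := by
  have hPmem := self_mem_smoothBall hP0 hP1 hε0
  have hP : ∃ x, 0 < P x := exists_pos_of_mem_smoothBall hε1 hPmem
  obtain ⟨φ₀, hφ₀, hmin⟩ := (isCompact_smoothBall ε P).exists_isMinOn ⟨P, hPmem⟩
    (continuous_maxRatio hP Q).continuousOn
  have hφ := raiseToRatio_mem_smoothBall (Q := Q) (M := maxRatio P φ₀ Q) hφ₀
  refine ⟨_, hφ.1, hφ.2, ?_, raiseToRatio_pos_iff hsupp (maxRatio_pos hsupp hε1 hφ₀) hφ₀⟩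
  rw [maxRatio_raiseToRatio hsupp hP]
  exact Dsm_eq_logb_maxRatio_of_isMinOn hφ₀ hmin

/-- the infimum defining the smooth max Rényi divergence is attained by a
minimizer `φ ∈ B^ε(P)` whose support equals the support of `P`. -/
theorem smooth_max_divergence_attained_full_support
    {α : Type*} [Fintype α]
    (P Q : α → ℝ)
    (hP0 : ∀ x, 0 ≤ P x) (hP1 : ∑ x, P x = 1)
    (hQ0 : ∀ x, 0 ≤ Q x) (hQ1 : ∑ x, Q x = 1)
    (hsupp : ∀ x, 0 < P x → 0 < Q x)
    (ε : ℝ) (hε0 : 0 ≤ ε) (hε1 : ε < 1) :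
    ∃ φ : α → ℝ, (∀ x, 0 ≤ φ x ∧ φ x ≤ P x) ∧ 1 - ε ≤ ∑ x, φ x ∧
      Dsm ε P Q = Real.logb 2 (maxRatio P φ Q) ∧
      (∀ x, 0 < φ x ↔ 0 < P x) :=
  smooth_max_divergence_attained_full_support_general P Q hP0 hP1 hsupp ε hε0 hε1
end

section
/- Let P_{UY} be a joint pmf on a finite set 𝒰×𝒴 with marginals P_U and P_Y, let φ be a nonnegative function on 𝒰×𝒴 with φ(u,y) ≤ P_{UY}(u,y) for all (u,y), and let D ≥ 0 satisfy φ(u,y)/(P_U(u)P_Y(y)) ≤ 2^D for all (u,y) with P_{UY}(u,y) > 0. Then for any subset ℱ ⊆ 𝒰×𝒴 and any positive integer M, Σ_{y∈𝒴} P_Y(y)·(1 − Σ_{u : (u,y) ∈ ℱ} P_U(u))^M ≤ 1 − Σ_{(u,y) ∈ ℱ} φ(u,y) + exp(−M·2^{−D}). In words: if M codewords U(1),…,U(M) are drawn i.i.d. from P_U, then the probability that Y has no index m with (U(m),Y) ∈ ℱ is at most 1 − φ(ℱ) + exp(−M·2^{−D}). -/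
/-!
Bound `(1 - S_y)^M ≤ exp (-M S_y)`, where `S_y = P_U(ℱ_y)` is the mass of the fibre of `ℱ` over `y`.
By convexity, `exp (-M x) ≤ 1 - min (x / c) 1 + exp (-M c)` with `c = 2^{-D}`, so it remains to
see that `P_Y(y) · min (2^D S_y) 1` dominates `φ(ℱ_y)`: both arguments of the `min` do, by
`φ ≤ 2^D P_U P_Y` and by `φ ≤ P_{UY}`.
-/

open scoped Classical

open Real Finset

lemma exp_neg_mul_le_one_sub_min_add {m c x : ℝ} (hm : 0 ≤ m) (hc : 0 < c) (hx : 0 ≤ x) :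
    exp (-(m * x)) ≤ 1 - min (x / c) 1 + exp (-(m * c)) := by
  rcases le_total c x with hcx | hxc
  · have hmin : min (x / c) 1 = 1 := min_eq_right ((one_le_div hc).2 hcx)
    have hmono : exp (-(m * x)) ≤ exp (-(m * c)) := by gcongr
    linarith
  · set t := x / c
    have ht0 : 0 ≤ t := div_nonneg hx hc.le
    have ht1 : t ≤ 1 := (div_le_one hc).2 hxc
    have hchord := convexOn_exp.2 (Set.mem_univ 0) (Set.mem_univ (-(m * c)))
      (sub_nonneg.2 ht1) ht0 (sub_add_cancel 1 t)
    have hpoint : (1 - t) • (0 : ℝ) + t • -(m * c) = -(m * x) := by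
      simp only [smul_eq_mul, mul_zero, zero_add, t]; field_simp
    rw [hpoint, smul_eq_mul, smul_eq_mul, exp_zero, mul_one] at hchord
    rw [min_eq_left ht1]
    nlinarith [exp_pos (-(m * c))]

lemma one_sub_pow_le_exp_neg_mul {x : ℝ} (hx : x ≤ 1) (n : ℕ) :
    (1 - x) ^ n ≤ exp (-(n * x)) := by
  calc (1 - x) ^ n ≤ exp (-x) ^ n := by
        gcongr
        exact one_sub_le_exp_neg x
    _ = exp (-(n * x)) := by rw [← exp_nat_mul, mul_neg]

lemma sum_sum_filter_mem_eq_sum {U Y : Type*} [Fintype U] [Fintype Y]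
    (F : Finset (U × Y)) (f : U × Y → ℝ) :
    ∑ y, ∑ u ∈ univ.filter (fun u => (u, y) ∈ F), f (u, y) = ∑ p ∈ F, f p := by
  rw [← univ_inter F, ← sum_ite_mem, Fintype.sum_prod_type_right]
  simp_rw [sum_filter, univ_inter]

lemma sum_le_mul_min_div {U : Type*} [Fintype U] {s : Finset U} {f g w : U → ℝ} {p c : ℝ}
    (hc : 0 < c) (hp : 0 ≤ p) (hfg : ∀ u, f u ≤ g u) (hg0 : ∀ u, 0 ≤ g u) (hgp : ∑ u, g u = p)
    (hfw : ∀ u, f u ≤ c⁻¹ * (w u * p)) :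
    ∑ u ∈ s, f u ≤ p * min ((∑ u ∈ s, w u) / c) 1 := by
  rw [mul_min_of_nonneg _ _ hp, mul_one]
  refine le_min ?_ ?_
  · calc ∑ u ∈ s, f u ≤ ∑ u ∈ s, c⁻¹ * (w u * p) := sum_le_sum fun u _ => hfw u
      _ = p * ((∑ u ∈ s, w u) / c) := by
        rw [← mul_sum, ← sum_mul]
        field_simp
  · calc ∑ u ∈ s, f u ≤ ∑ u ∈ s, g u := sum_le_sum fun u _ => hfg u
      _ ≤ p := hgp ▸ sum_le_univ_sum_of_nonneg hg0

theorem covering_lemma_bound_general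
    {U Y : Type*} [Fintype U] [Fintype Y]
    (PUY : U × Y → ℝ)
    (hP0 : ∀ p, 0 ≤ PUY p) (hP1 : ∑ p, PUY p = 1)
    (PU : U → ℝ) (hPU : ∀ u, PU u = ∑ y, PUY (u, y))
    (PY : Y → ℝ) (hPY : ∀ y, PY y = ∑ u, PUY (u, y))
    (φ : U × Y → ℝ)
    (hφle : ∀ p, φ p ≤ PUY p)
    (D : ℝ)
    (hφD : ∀ p : U × Y, 0 < PUY p → φ p ≤ 2 ^ D * (PU p.1 * PY p.2))
    (F : Finset (U × Y)) (M : ℕ) :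
    ∑ y, PY y * (1 - ∑ u ∈ Finset.univ.filter (fun u => (u, y) ∈ F), PU u) ^ M
      ≤ 1 - ∑ p ∈ F, φ p + Real.exp (-(M * 2 ^ (-D))) := by
  set c : ℝ := 2 ^ (-D)
  have hc : 0 < c := rpow_pos_of_pos two_pos _
  set S : Y → ℝ := fun y => ∑ u ∈ univ.filter (fun u => (u, y) ∈ F), PU u
  have hPU0 (u : U) : 0 ≤ PU u := hPU u ▸ sum_nonneg fun y _ => hP0 _
  have hPY0 (y : Y) : 0 ≤ PY y := hPY y ▸ sum_nonneg fun u _ => hP0 _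
  have hPU1 : ∑ u, PU u = 1 := by simp_rw [hPU, ← Fintype.sum_prod_type, hP1]
  have hPY1 : ∑ y, PY y = 1 := by simp_rw [hPY, ← Fintype.sum_prod_type_right, hP1]
  have hS1 (y : Y) : S y ≤ 1 :=
    hPU1 ▸ sum_le_univ_sum_of_nonneg hPU0
  have hφc (p : U × Y) : φ p ≤ c⁻¹ * (PU p.1 * PY p.2) := by
    rw [← rpow_neg zero_le_two, neg_neg]
    rcases (hP0 p).lt_or_eq with hpos | hzero
    · exact hφD p hpos
    · exact (hφle p).trans (hzero ▸ mul_nonneg (by positivity) (mul_nonneg (hPU0 _) (hPY0 _)))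
  calc ∑ y, PY y * (1 - S y) ^ M
      ≤ ∑ y, PY y * (1 - min (S y / c) 1 + exp (-(M * c))) := by
        gcongr with y
        · exact hPY0 y
        exact (one_sub_pow_le_exp_neg_mul (hS1 y) M).trans
          (exp_neg_mul_le_one_sub_min_add M.cast_nonneg hc (sum_nonneg fun u _ => hPU0 u))
    _ = 1 - ∑ y, PY y * min (S y / c) 1 + exp (-(M * c)) := by
        simp only [mul_add, mul_sub, mul_one, sum_add_distrib, sum_sub_distrib, ← sum_mul, hPY1,
          one_mul]
    _ ≤ 1 - ∑ p ∈ F, φ p + exp (-(M * c)) := by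
        rw [← sum_sum_filter_mem_eq_sum]
        gcongr with y
        exact sum_le_mul_min_div hc (hPY0 y) (fun u => hφle (u, y)) (fun u => hP0 (u, y))
          (hPY y).symm fun u => hφc (u, y)

/-- covering bound.  If `φ ≤ P_{UY}` pointwise and
`φ(u,y) ≤ 2^D · P_U(u)P_Y(y)` whenever `P_{UY}(u,y) > 0`, then for any set
`ℱ ⊆ 𝒰 × 𝒴` and any positive integer `M`, the probability that `M` i.i.d. codewords
drawn from `P_U` all miss `ℱ` for `Y ~ P_Y` satisfies
`∑_y P_Y(y) (1 − ∑_{u : (u,y) ∈ ℱ} P_U(u))^M ≤ 1 − φ(ℱ) + exp(−M·2^{−D})`. -/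
theorem covering_lemma_bound
    {U Y : Type*} [Fintype U] [Fintype Y]
    (PUY : U × Y → ℝ)
    (hP0 : ∀ p, 0 ≤ PUY p) (hP1 : ∑ p, PUY p = 1)
    (PU : U → ℝ) (hPU : ∀ u, PU u = ∑ y, PUY (u, y))
    (PY : Y → ℝ) (hPY : ∀ y, PY y = ∑ u, PUY (u, y))
    (φ : U × Y → ℝ)
    (hφ0 : ∀ p, 0 ≤ φ p) (hφle : ∀ p, φ p ≤ PUY p)
    (D : ℝ) (hD : 0 ≤ D)
    (hφD : ∀ p : U × Y, 0 < PUY p → φ p ≤ 2 ^ D * (PU p.1 * PY p.2))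
    (F : Finset (U × Y)) (M : ℕ) (hM : 0 < M) :
    ∑ y, PY y * (1 - ∑ u ∈ Finset.univ.filter (fun u => (u, y) ∈ F), PU u) ^ M
      ≤ 1 - ∑ p ∈ F, φ p + Real.exp (-(M * 2 ^ (-D))) :=
  covering_lemma_bound_general PUY hP0 hP1 PU hPU PY hPY φ hφle D hφD F M
end

section
/- Let (X,Y) ~ P_{XY} on a finite set 𝒳×𝒴, and let P_{U|Y} be a conditional pmf from 𝒴 to a finite set 𝒰 inducing the Markov chain X → Y → U with joint distribution P_{XYU}(x,y,u) = P_{XY}(x,y)P_{U|Y}(u|y). Then any rate pair (R₁,R₂) with R₁ > H(X|U) and R₂ > I(Y;U) is asymptotically achievable for source coding of X with coded side information Y at the decoder: for every ε > 0 and all sufficiently large n (with (X^n,Y^n) i.i.d. ~ P_{XY}), there exist maps e₁ : 𝒳^n → {1,…,⌈2^{nR₁}⌉}, e₂ : 𝒴^n → {1,…,⌈2^{nR₂}⌉}, and d : {1,…,⌈2^{nR₁}⌉} × {1,…,⌈2^{nR₂}⌉} → 𝒳^n such that Pr{d(e₁(X^n), e₂(Y^n)) ≠ X^n} ≤ ε.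 -/
open scoped Classical BigOperators

/-!
Random binning of `X` together with a likelihood encoder for `Y`.

Draw a codebook of `M₂ ≈ 2^{nR₂}` i.i.d. `P_U^n` codewords and send, for each `y`, the index of
the codeword that is best for the decoder. This is no worse than the likelihood encoder, which
picks index `i` with probability proportional to `P_{Y|U}(y | Uᵢ)`; by the soft covering lemma
the latter makes the codeword and `X` almost `P_{XU}^n`-distributed as soon as
`R₂ > I(Y;U)`. Bin `x` uniformly at random into `M₁ ≈ 2^{nR₁}` bins, and decode to the element
of the bin with `P_{X|U}(x | u) ≥ 2^{-na₁}`. At most `2^{na₁}` sequences qualify, so a wrong one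
shares the bin with probability at most `2^{na₁} / M₁`, which vanishes for
`H(X|U) < a₁ < R₁`. What remains are deviations of i.i.d. sums of information densities, which
Chebyshev's inequality bounds by `O(1/n)`.
-/

open Finset Real Filter Topology

section Expectation

variable {β : Type*} [Fintype β] {w : β → ℝ}

theorem exists_le_sum_mul (hw : w ∈ stdSimplex ℝ β) (v : β → ℝ) : ∃ b, v b ≤ ∑ b, w b * v b := by
  have : Nonempty β := by
    by_contra h
    rw [not_nonempty_iff] at h
    simpa using hw.2
  obtain ⟨b, hb⟩ := Finite.exists_min v
  refine ⟨b, ?_⟩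
  calc v b = ∑ b', w b' * v b := by rw [← sum_mul, hw.2, one_mul]
    _ ≤ ∑ b', w b' * v b' := sum_le_sum fun b' _ => mul_le_mul_of_nonneg_left (hb b') (hw.1 b')

theorem sum_mul_sum_eq_sum_sum_mul {γ : Type*} [Fintype γ] (w : β → ℝ) (f : β → γ → ℝ) :
    ∑ b, w b * ∑ c, f b c = ∑ c, ∑ b, w b * f b c := by
  simp only [mul_sum]
  exact sum_comm

theorem sum_mul_abs_le_sqrt_sum_mul_sq (hw : w ∈ stdSimplex ℝ β) (Z : β → ℝ) :
    ∑ b, w b * |Z b| ≤ √(∑ b, w b * Z b ^ 2) := by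
  refine le_sqrt_of_sq_le ?_
  have := sum_sq_le_sum_mul_sum_of_sq_le_mul univ (r := fun b => w b * |Z b|)
    (fun b _ => hw.1 b) (fun b _ => mul_nonneg (hw.1 b) (sq_nonneg (Z b)))
    (fun b _ => by rw [mul_pow, sq_abs, sq, mul_assoc])
  rwa [hw.2, one_mul] at this

theorem sum_ite_le_sum_mul_sq_div (hw : ∀ b, 0 ≤ w b) (Z : β → ℝ) {t : ℝ} (ht : 0 < t)
    {E : β → Prop} (hE : ∀ b, E b → 0 < w b → t ≤ |Z b|) :
    ∑ b, (if E b then w b else 0) ≤ (∑ b, w b * Z b ^ 2) / t ^ 2 := by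
  rw [le_div_iff₀ (by positivity), sum_mul]
  refine sum_le_sum fun b _ => ?_
  split_ifs with hb
  · rcases (hw b).eq_or_lt with h0 | hpos
    · simp [← h0]
    · rw [← sq_abs (Z b)]
      gcongr
      exact hE b hb hpos
  · simpa using mul_nonneg (hw b) (sq_nonneg (Z b))

end Expectation

section IID

variable {ι α : Type*} [Fintype ι] [DecidableEq ι] [Fintype α] {w : α → ℝ}

theorem sum_pi_prod_mul_prod (hw : ∑ a, w a = 1) (s : Finset ι) (h : ι → α → ℝ) :
    ∑ c : ι → α, (∏ i, w (c i)) * ∏ i ∈ s, h i (c i) = ∏ i ∈ s, ∑ a, w a * h i a := by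
  have hfactor : ∀ c : ι → α, (∏ i, w (c i)) * ∏ i ∈ s, h i (c i)
      = ∏ i, (w (c i) * if i ∈ s then h i (c i) else 1) := by
    intro c
    rw [prod_mul_distrib, prod_ite_mem, univ_inter]
  have hcoord : ∀ i, ∑ a, w a * (if i ∈ s then h i a else 1)
      = if i ∈ s then ∑ a, w a * h i a else 1 := by
    intro i
    split_ifs <;> simp [hw]
  simp only [hfactor]
  rw [← Fintype.prod_sum (fun i a => w a * if i ∈ s then h i a else 1)]
  simp only [hcoord]
  rw [prod_ite_mem, univ_inter]

theorem sum_pi_prod (hw : ∑ a, w a = 1) : ∑ c : ι → α, ∏ i, w (c i) = 1 := by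
  simpa using sum_pi_prod_mul_prod hw (ι := ι) ∅ (fun _ _ => 1)

theorem pi_prod_mem_stdSimplex (hw : w ∈ stdSimplex ℝ α) :
    (fun c : ι → α => ∏ i, w (c i)) ∈ stdSimplex ℝ (ι → α) :=
  ⟨fun _ => prod_nonneg fun _ _ => hw.1 _, sum_pi_prod hw.2⟩

theorem sum_pi_prod_mul_apply (hw : ∑ a, w a = 1) (j : ι) (f : α → ℝ) :
    ∑ c : ι → α, (∏ i, w (c i)) * f (c j) = ∑ a, w a * f a := by
  simpa using sum_pi_prod_mul_prod hw {j} (fun _ a => f a)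

theorem sum_pi_prod_mul_apply_mul_apply (hw : ∑ a, w a = 1) {i j : ι} (hij : i ≠ j)
    (f g : α → ℝ) :
    ∑ c : ι → α, (∏ k, w (c k)) * (f (c i) * g (c j))
      = (∑ a, w a * f a) * ∑ a, w a * g a := by
  have := sum_pi_prod_mul_prod hw {i, j} (fun k a => if k = i then f a else g a)
  simpa [prod_pair hij, hij.symm] using this

theorem sum_pi_prod_mul_sq_sum (hw : ∑ a, w a = 1) {g : α → ℝ} (hg : ∑ a, w a * g a = 0) :
    ∑ c : ι → α, (∏ i, w (c i)) * (∑ i, g (c i)) ^ 2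
      = Fintype.card ι * ∑ a, w a * g a ^ 2 := by
  have hpair : ∀ i j : ι, ∑ c : ι → α, (∏ k, w (c k)) * (g (c i) * g (c j))
      = if i = j then ∑ a, w a * g a ^ 2 else 0 := by
    intro i j
    split_ifs with hij
    · subst hij
      simp only [← sq]
      exact sum_pi_prod_mul_apply hw i (fun a => g a ^ 2)
    · rw [sum_pi_prod_mul_apply_mul_apply hw hij, hg, zero_mul]
  calc ∑ c : ι → α, (∏ i, w (c i)) * (∑ i, g (c i)) ^ 2
      = ∑ i, ∑ j, ∑ c : ι → α, (∏ k, w (c k)) * (g (c i) * g (c j)) := by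
        simp_rw [sq, sum_mul_sum, mul_sum]
        rw [sum_comm]
        exact sum_congr rfl fun i _ => sum_comm
    _ = Fintype.card ι * ∑ a, w a * g a ^ 2 := by simp [hpair]

theorem sum_pi_prod_mul_avg [Nonempty ι] (hw : ∑ a, w a = 1) (h : α → ℝ) :
    ∑ c : ι → α, (∏ i, w (c i)) * ((Fintype.card ι : ℝ)⁻¹ * ∑ i, h (c i))
      = ∑ a, w a * h a := by
  simp only [mul_left_comm _ (Fintype.card ι : ℝ)⁻¹, ← mul_sum]
  rw [sum_mul_sum_eq_sum_sum_mul]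
  simp only [sum_pi_prod_mul_apply hw]
  rw [sum_const, card_univ, nsmul_eq_mul, ← mul_assoc, inv_mul_cancel₀ (by positivity), one_mul]

theorem sum_pi_uniform_mul_ite_eq [Nonempty α] {i j : ι} (hij : i ≠ j) :
    ∑ c : ι → α, (∏ _ : ι, (Fintype.card α : ℝ)⁻¹) * (if c i = c j then 1 else 0)
      = (Fintype.card α : ℝ)⁻¹ := by
  set k : ℝ := (Fintype.card α : ℝ)
  have hw : ∑ _v : α, k⁻¹ = 1 := by simp [k]
  have hsplit : ∀ c : ι → α, (if c i = c j then (1 : ℝ) else 0)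
      = ∑ v, (if c i = v then 1 else 0) * (if c j = v then 1 else 0) := by
    intro c
    simp [eq_comm]
  calc ∑ c : ι → α, (∏ _ : ι, k⁻¹) * (if c i = c j then 1 else 0)
      = ∑ v, ∑ c : ι → α,
          (∏ _ : ι, k⁻¹) * ((if c i = v then 1 else 0) * (if c j = v then 1 else 0)) := by
        simp only [hsplit]
        exact sum_mul_sum_eq_sum_sum_mul _ _
    _ = ∑ _v : α, k⁻¹ * k⁻¹ := sum_congr rfl fun v _ => by
        rw [sum_pi_prod_mul_apply_mul_apply hw hij (fun a => if a = v then (1 : ℝ) else 0)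
          (fun a => if a = v then 1 else 0)]
        simp
    _ = k⁻¹ := by rw [← sum_mul, hw, one_mul]

theorem sum_pi_prod_mul_abs_avg_sub_le [Nonempty ι] (hw : w ∈ stdSimplex ℝ α) {h : α → ℝ}
    {c : ℝ} (h0 : ∀ a, 0 ≤ h a) (hc : ∀ a, h a ≤ c) :
    ∑ C : ι → α, (∏ i, w (C i)) * |(Fintype.card ι : ℝ)⁻¹ * ∑ i, h (C i) - ∑ a, w a * h a|
      ≤ √(c * (∑ a, w a * h a) / Fintype.card ι) := by
  set μ := ∑ a, w a * h a
  set k : ℝ := (Fintype.card ι : ℝ)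
  have hk : 0 < k := by positivity
  have hcenter : ∑ a, w a * (h a - μ) = 0 := by
    simp only [mul_sub, sum_sub_distrib, ← sum_mul, hw.2, one_mul]
    exact sub_self μ
  have hvar : ∑ a, w a * (h a - μ) ^ 2 ≤ c * μ := by
    have hsecond : ∑ a, w a * (h a - μ) ^ 2 = ∑ a, w a * h a ^ 2 - μ ^ 2 := by
      have : ∀ a, w a * (h a - μ) ^ 2 = w a * h a ^ 2 - 2 * μ * (w a * h a) + μ ^ 2 * w a :=
        fun a => by ring
      simp only [this, sum_add_distrib, sum_sub_distrib, ← mul_sum, hw.2]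
      ring
    have hbound : ∑ a, w a * h a ^ 2 ≤ c * μ := by
      rw [mul_sum]
      refine sum_le_sum fun a _ => ?_
      have : h a ^ 2 ≤ c * h a := by rw [sq]; exact mul_le_mul_of_nonneg_right (hc a) (h0 a)
      nlinarith [hw.1 a]
    nlinarith [sq_nonneg μ]
  have hdev : ∀ C : ι → α, k⁻¹ * ∑ i, h (C i) - μ = k⁻¹ * ∑ i, (h (C i) - μ) := by
    intro C
    rw [sum_sub_distrib, sum_const, card_univ, nsmul_eq_mul, mul_sub, ← mul_assoc,
      inv_mul_cancel₀ hk.ne', one_mul]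
  calc ∑ C : ι → α, (∏ i, w (C i)) * |k⁻¹ * ∑ i, h (C i) - μ|
      ≤ √(∑ C : ι → α, (∏ i, w (C i)) * (k⁻¹ * ∑ i, h (C i) - μ) ^ 2) :=
        sum_mul_abs_le_sqrt_sum_mul_sq (pi_prod_mem_stdSimplex hw) _
    _ = √((∑ a, w a * (h a - μ) ^ 2) / k) := by
        simp only [hdev, mul_pow, mul_left_comm _ (k⁻¹ ^ 2), ← mul_sum,
          sum_pi_prod_mul_sq_sum hw.2 hcenter]
        change √(k⁻¹ ^ 2 * (k * _)) = _
        congr 1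
        field_simp
    _ ≤ √(c * μ / k) := by gcongr

end IID
section Spectrum

variable {α : Type*} [Fintype α] {w r : α → ℝ}

theorem sum_pi_ite_le_variance_div (hw : w ∈ stdSimplex ℝ α) (hr : ∀ a, 0 < w a → 0 < r a)
    {μ : ℝ} (hμ : ∑ a, w a * logb 2 (r a) = μ) {δ : ℝ} (hδ : 0 < δ) {n : ℕ} (hn : 0 < n)
    {E : (Fin n → α) → Prop}
    (hE : ∀ x, E x → (∀ i, 0 < r (x i)) → n * δ ≤ |logb 2 (∏ i, r (x i)) - n * μ|) :
    ∑ x : Fin n → α, (if E x then ∏ i, w (x i) else 0)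
      ≤ (∑ a, w a * (logb 2 (r a) - μ) ^ 2) / (n * δ ^ 2) := by
  have hcenter : ∑ a, w a * (logb 2 (r a) - μ) = 0 := by
    simp only [mul_sub, sum_sub_distrib, ← sum_mul, hw.2, one_mul, hμ, sub_self]
  have hdev : ∀ x : Fin n → α, (∀ i, 0 < r (x i)) →
      logb 2 (∏ i, r (x i)) - n * μ = ∑ i, (logb 2 (r (x i)) - μ) := by
    intro x hx
    rw [logb_prod _ _ fun i _ => (hx i).ne', sum_sub_distrib, sum_const, card_univ,
      Fintype.card_fin, nsmul_eq_mul]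
  have hsupp : ∀ x : Fin n → α, 0 < ∏ i, w (x i) → ∀ i, 0 < r (x i) := fun x hpos i =>
    hr _ ((hw.1 _).lt_of_ne' (prod_ne_zero_iff.mp hpos.ne' i (mem_univ i)))
  calc ∑ x : Fin n → α, (if E x then ∏ i, w (x i) else 0)
      ≤ (∑ x : Fin n → α, (∏ i, w (x i)) * (∑ i, (logb 2 (r (x i)) - μ)) ^ 2) / (n * δ) ^ 2 :=
        sum_ite_le_sum_mul_sq_div (pi_prod_mem_stdSimplex hw).1 _ (by positivity)
          fun x hx hpos => hdev x (hsupp x hpos) ▸ hE x hx (hsupp x hpos)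
    _ = (∑ a, w a * (logb 2 (r a) - μ) ^ 2) / (n * δ ^ 2) := by
        rw [sum_pi_prod_mul_sq_sum hw.2 hcenter, Fintype.card_fin]
        field_simp

theorem exists_sum_pi_ite_lt_prod_le (hw : w ∈ stdSimplex ℝ α) (hr : ∀ a, 0 < w a → 0 < r a)
    {a : ℝ} (ha : ∑ b, w b * logb 2 (r b) < a) :
    ∃ c, ∀ n : ℕ, 0 < n → ∑ x : Fin n → α,
      (if (2 : ℝ) ^ (n * a) < ∏ i, r (x i) then ∏ i, w (x i) else 0) ≤ c / n := by
  set μ := ∑ b, w b * logb 2 (r b)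
  refine ⟨(∑ b, w b * (logb 2 (r b) - μ) ^ 2) / (a - μ) ^ 2, fun n hn => ?_⟩
  calc _ ≤ (∑ b, w b * (logb 2 (r b) - μ) ^ 2) / (n * (a - μ) ^ 2) :=
        sum_pi_ite_le_variance_div hw hr rfl (sub_pos.mpr ha) hn fun x hx hxi => by
          have := (lt_logb_iff_rpow_lt one_lt_two (prod_pos fun i _ => hxi i)).mpr hx
          rw [abs_of_nonneg (by nlinarith [(Nat.cast_pos.mpr hn : (0:ℝ) < n)])]
          linarith
    _ = _ := by rw [div_div, mul_comm]

theorem exists_sum_pi_ite_prod_lt_le (hw : w ∈ stdSimplex ℝ α) (hr : ∀ a, 0 < w a → 0 < r a)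
    {a : ℝ} (ha : a < ∑ b, w b * logb 2 (r b)) :
    ∃ c, ∀ n : ℕ, 0 < n → ∑ x : Fin n → α,
      (if ∏ i, r (x i) < (2 : ℝ) ^ (n * a) then ∏ i, w (x i) else 0) ≤ c / n := by
  set μ := ∑ b, w b * logb 2 (r b)
  refine ⟨(∑ b, w b * (logb 2 (r b) - μ) ^ 2) / (μ - a) ^ 2, fun n hn => ?_⟩
  calc _ ≤ (∑ b, w b * (logb 2 (r b) - μ) ^ 2) / (n * (μ - a) ^ 2) :=
        sum_pi_ite_le_variance_div hw hr rfl (sub_pos.mpr ha) hn fun x hx hxi => by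
          have := (logb_lt_iff_lt_rpow one_lt_two (prod_pos fun i _ => hxi i)).mpr hx
          rw [abs_of_nonpos (by nlinarith [(Nat.cast_pos.mpr hn : (0:ℝ) < n)])]
          linarith
    _ = _ := by rw [div_div, mul_comm]

end Spectrum

section Binning

variable {A J β : Type*} [DecidableEq A] [Nonempty A]

noncomputable def binDecoder (S : J → Finset A) (b : A → β) (p : β × J) : A :=
  if h : ∃ x ∈ S p.2, b x = p.1 then h.choose else Classical.arbitrary A

theorem binDecoder_ne_le (S : J → Finset A) (b : A → β) {x : A} {j : J} (hx : x ∈ S j) :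
    (if binDecoder S b (b x, j) ≠ x then (1 : ℝ) else 0)
      ≤ ∑ x' ∈ (S j).erase x, if b x' = b x then 1 else 0 := by
  have hex : ∃ x' ∈ S j, b x' = b x := ⟨x, hx, rfl⟩
  split_ifs with hne
  · obtain ⟨hmem, hbin⟩ := hex.choose_spec
    rw [binDecoder, dif_pos hex] at hne
    calc (1 : ℝ) = if b hex.choose = b x then 1 else 0 := by rw [if_pos hbin]
      _ ≤ _ := single_le_sum (f := fun x' => if b x' = b x then (1 : ℝ) else 0)
          (fun _ _ => by split_ifs <;> norm_num) (mem_erase.mpr ⟨hne, hmem⟩)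
  · exact sum_nonneg fun _ _ => by split_ifs <;> norm_num

variable [Fintype A] [Fintype β] [Nonempty β]

theorem sum_pi_uniform_mul_binDecoder_ne_le (S : J → Finset A) {L : ℝ}
    (hS : ∀ j, ((S j).card : ℝ) ≤ L) (x : A) (j : J) :
    ∑ b : A → β, (∏ _ : A, (Fintype.card β : ℝ)⁻¹) *
        (if binDecoder S b (b x, j) ≠ x then 1 else 0)
      ≤ (if x ∉ S j then 1 else 0) + L / Fintype.card β := by
  have hu := pi_prod_mem_stdSimplex (ι := A) (w := fun _ : β => (Fintype.card β : ℝ)⁻¹)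
    ⟨fun _ => by positivity, by simp⟩
  by_cases hx : x ∈ S j
  · calc _ ≤ ∑ b : A → β, (∏ _ : A, (Fintype.card β : ℝ)⁻¹) *
            ∑ x' ∈ (S j).erase x, (if b x' = b x then 1 else 0) :=
          sum_le_sum fun b _ => mul_le_mul_of_nonneg_left (binDecoder_ne_le S b hx) (hu.1 b)
      _ = ∑ _x' ∈ (S j).erase x, (Fintype.card β : ℝ)⁻¹ := by
          simp only [mul_sum]
          rw [sum_comm]
          exact sum_congr rfl fun x' hx' => sum_pi_uniform_mul_ite_eq (ne_of_mem_erase hx')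
      _ ≤ L / Fintype.card β := by
          rw [sum_const, nsmul_eq_mul, div_eq_mul_inv]
          gcongr
          exact le_trans (by exact_mod_cast card_erase_le) (hS j)
      _ = _ := by simp [hx]
  · have hLk : 0 ≤ L / Fintype.card β :=
      div_nonneg ((Nat.cast_nonneg _).trans (hS j)) (Nat.cast_nonneg _)
    calc _ ≤ ∑ b : A → β, (∏ _ : A, (Fintype.card β : ℝ)⁻¹) :=
          sum_le_sum fun b _ => mul_le_of_le_one_right (hu.1 b) (by split_ifs <;> norm_num)
      _ ≤ _ := by rw [hu.2, if_pos hx]; linarith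

theorem exists_bin_decoder_error_le {B : Type*} [Fintype B] {ρ : A × B → ℝ}
    (hρ : ρ ∈ stdSimplex ℝ (A × B)) (e : B → J) (S : J → Finset A) {L : ℝ}
    (hS : ∀ j, ((S j).card : ℝ) ≤ L) :
    ∃ (b : A → β) (d : β × J → A), ∑ x, ∑ y, (if d (b x, e y) ≠ x then ρ (x, y) else 0)
      ≤ ∑ x, ∑ y, (if x ∉ S (e y) then ρ (x, y) else 0) + L / Fintype.card β := by
  set u : (A → β) → ℝ := fun _ => ∏ _ : A, (Fintype.card β : ℝ)⁻¹
  have hu : u ∈ stdSimplex ℝ (A → β) :=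
    pi_prod_mem_stdSimplex (w := fun _ : β => (Fintype.card β : ℝ)⁻¹)
      ⟨fun _ => by positivity, by simp⟩
  have hmass : ∑ x, ∑ y, ρ (x, y) = 1 := by rw [← Fintype.sum_prod_type']; exact hρ.2
  have havg : ∑ b, u b * ∑ x, ∑ y, (if binDecoder S b (b x, e y) ≠ x then ρ (x, y) else 0)
      ≤ ∑ x, ∑ y, (if x ∉ S (e y) then ρ (x, y) else 0) + L / Fintype.card β := by
    calc _ = ∑ x, ∑ y, ρ (x, y) *
            ∑ b, u b * (if binDecoder S b (b x, e y) ≠ x then 1 else 0) := by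
          rw [sum_mul_sum_eq_sum_sum_mul]
          refine sum_congr rfl fun x _ => ?_
          rw [sum_mul_sum_eq_sum_sum_mul]
          refine sum_congr rfl fun y _ => ?_
          rw [mul_sum]
          exact sum_congr rfl fun b _ => by split_ifs <;> ring
      _ ≤ ∑ x, ∑ y, ρ (x, y) * ((if x ∉ S (e y) then 1 else 0) + L / Fintype.card β) := by
          gcongr with x _ y _
          · exact hρ.1 _
          · exact sum_pi_uniform_mul_binDecoder_ne_le S hS x (e y)
      _ = _ := by
          simp only [mul_add, sum_add_distrib, ← sum_mul, mul_ite, mul_one, mul_zero, hmass,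
            one_mul]
  obtain ⟨b, hb⟩ := exists_le_sum_mul hu _
  exact ⟨b, binDecoder S b, hb.trans havg⟩

end Binning

section Covering

variable {ι α : Type*} [Fintype ι] [Nonempty ι] [Fintype α] {w : α → ℝ}

-- Truncate `h` at `K` times its mean: the bounded part concentrates by the second-moment
-- bound, and the rest costs at most its mean.
theorem sum_pi_prod_mul_abs_sub_avg_le [DecidableEq ι] (hw : w ∈ stdSimplex ℝ α) {h : α → ℝ}
    (h0 : ∀ a, 0 ≤ h a) {K : ℝ} (hK : 0 ≤ K) :
    ∑ C : ι → α, (∏ i, w (C i)) * |∑ a, w a * h a - (Fintype.card ι : ℝ)⁻¹ * ∑ i, h (C i)|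
      ≤ (∑ a, w a * h a) * √(K / Fintype.card ι)
        + 2 * ∑ a, (if K * ∑ a, w a * h a < h a then w a * h a else 0) := by
  set μ := ∑ a, w a * h a
  set k : ℝ := (Fintype.card ι : ℝ)
  set h₁ : α → ℝ := fun a => if K * μ < h a then 0 else h a
  set h₂ : α → ℝ := fun a => if K * μ < h a then h a else 0
  have hsplit : ∀ a, h a = h₁ a + h₂ a := fun a => by
    simp only [h₁, h₂]
    split_ifs <;> ring
  have hμ : 0 ≤ μ := sum_nonneg fun a _ => mul_nonneg (hw.1 a) (h0 a)
  have h₁0 : ∀ a, 0 ≤ h₁ a := fun a => by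
    simp only [h₁]
    split_ifs
    exacts [le_rfl, h0 a]
  have h₁K : ∀ a, h₁ a ≤ K * μ := fun a => by
    simp only [h₁]
    split_ifs with ha
    exacts [mul_nonneg hK hμ, not_lt.mp ha]
  have h₂0 : ∀ a, 0 ≤ h₂ a := fun a => by
    simp only [h₂]
    split_ifs
    exacts [h0 a, le_rfl]
  set m := ∑ a, w a * h₁ a
  have hgap : ∑ a, w a * h₂ a = μ - m := by
    have : μ = m + ∑ a, w a * h₂ a := by
      simp only [μ, m, ← sum_add_distrib, ← mul_add, ← hsplit]
    linarith
  have hm : m ≤ μ := by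
    linarith [hgap, sum_nonneg fun a (_ : a ∈ univ) => mul_nonneg (hw.1 a) (h₂0 a)]
  have htri : ∀ C : ι → α, |μ - k⁻¹ * ∑ i, h (C i)|
      ≤ |k⁻¹ * ∑ i, h₁ (C i) - m| + k⁻¹ * ∑ i, h₂ (C i) + (μ - m) := by
    intro C
    have hQ₂ : 0 ≤ k⁻¹ * ∑ i, h₂ (C i) := by
      have := sum_nonneg fun i (_ : i ∈ univ) => h₂0 (C i)
      positivity
    simp only [hsplit, sum_add_distrib, mul_add]
    rw [abs_le]
    constructor <;>
      linarith [le_abs_self (k⁻¹ * ∑ i, h₁ (C i) - m), neg_abs_le (k⁻¹ * ∑ i, h₁ (C i) - m)]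
  have hconc : √(K * μ * m / k) ≤ μ * √(K / k) := by
    have hKm : K * μ * m ≤ K * μ * μ := mul_le_mul_of_nonneg_left hm (mul_nonneg hK hμ)
    calc √(K * μ * m / k) ≤ √(K * μ * μ / k) := by gcongr
      _ = μ * √(K / k) := by
          rw [show K * μ * μ / k = μ ^ 2 * (K / k) by ring, sqrt_mul (sq_nonneg _),
            sqrt_sq hμ]
  calc ∑ C : ι → α, (∏ i, w (C i)) * |μ - k⁻¹ * ∑ i, h (C i)|
      ≤ ∑ C : ι → α, (∏ i, w (C i)) *
          (|k⁻¹ * ∑ i, h₁ (C i) - m| + k⁻¹ * ∑ i, h₂ (C i) + (μ - m)) :=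
        sum_le_sum fun C _ => mul_le_mul_of_nonneg_left (htri C) ((pi_prod_mem_stdSimplex hw).1 C)
    _ = ∑ C : ι → α, (∏ i, w (C i)) * |k⁻¹ * ∑ i, h₁ (C i) - m|
          + ∑ C : ι → α, (∏ i, w (C i)) * (k⁻¹ * ∑ i, h₂ (C i)) + (μ - m) := by
        simp only [mul_add, sum_add_distrib, ← sum_mul, sum_pi_prod hw.2, one_mul]
    _ ≤ μ * √(K / k) + 2 * (μ - m) := by
        rw [sum_pi_prod_mul_avg hw.2, hgap]
        linarith [(sum_pi_prod_mul_abs_avg_sub_le hw h₁0 h₁K).trans hconc]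
    _ = _ := by simp only [← hgap, h₂, mul_ite, mul_zero]

-- The right side bounds the loss of the likelihood encoder, which picks `i` with probability
-- proportional to `φ i`; the best index does at least as well.
theorem exists_mul_le_abs_sub_add_avg_mul {φ g : ι → ℝ} (hφ : ∀ i, 0 ≤ φ i)
    (hg0 : ∀ i, 0 ≤ g i) (hg1 : ∀ i, g i ≤ 1) (p : ℝ) :
    ∃ i, p * g i ≤ |p - (Fintype.card ι : ℝ)⁻¹ * ∑ j, φ j|
      + (Fintype.card ι : ℝ)⁻¹ * ∑ j, φ j * g j := by
  obtain ⟨i, hi⟩ := Finite.exists_min g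
  refine ⟨i, ?_⟩
  set Q := (Fintype.card ι : ℝ)⁻¹ * ∑ j, φ j
  have hQ : Q * g i ≤ (Fintype.card ι : ℝ)⁻¹ * ∑ j, φ j * g j := by
    rw [mul_assoc, sum_mul]
    gcongr _ * ?_
    exact sum_le_sum fun j _ => mul_le_mul_of_nonneg_left (hi j) (hφ j)
  have hdev : (p - Q) * g i ≤ |p - Q| :=
    (mul_le_mul_of_nonneg_right (le_abs_self _) (hg0 i)).trans
      (mul_le_of_le_one_right (abs_nonneg _) (hg1 i))
  linarith

variable {V B : Type*} [Fintype V] [Fintype B] [DecidableEq ι] {pU : V → ℝ} {Φ : V → B → ℝ}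
  {pY : B → ℝ}

/-- The soft covering lemma: driving the channel `Φ` by a uniformly chosen codeword of an
i.i.d. `pU` codebook reproduces `pY` up to a small expected total variation. -/
theorem soft_covering (hpU : pU ∈ stdSimplex ℝ V) (hΦ : ∀ u y, 0 ≤ Φ u y)
    (hpY : ∀ y, ∑ u, pU u * Φ u y = pY y) (hpY1 : ∑ y, pY y = 1) {K : ℝ} (hK : 0 ≤ K) :
    ∑ C : ι → V, (∏ i, pU (C i)) * ∑ y, |pY y - (Fintype.card ι : ℝ)⁻¹ * ∑ i, Φ (C i) y|
      ≤ 2 * ∑ u, ∑ y, (if K * pY y < Φ u y then pU u * Φ u y else 0)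
        + √(K / Fintype.card ι) := by
  calc _ = ∑ y, ∑ C : ι → V, (∏ i, pU (C i)) * |pY y - (Fintype.card ι : ℝ)⁻¹ * ∑ i, Φ (C i) y|
        := sum_mul_sum_eq_sum_sum_mul _ _
    _ ≤ ∑ y, (pY y * √(K / Fintype.card ι)
          + 2 * ∑ u, (if K * pY y < Φ u y then pU u * Φ u y else 0)) :=
        sum_le_sum fun y _ => by
          simpa only [hpY y] using sum_pi_prod_mul_abs_sub_avg_le (ι := ι) hpU (hΦ · y) hK
    _ = _ := by
        simp only [sum_add_distrib, ← sum_mul, hpY1, one_mul, ← mul_sum]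
        rw [sum_comm, add_comm]

theorem exists_codebook_encoder_le (hpU : pU ∈ stdSimplex ℝ V) (hΦ : ∀ u y, 0 ≤ Φ u y)
    (hpY : ∀ y, ∑ u, pU u * Φ u y = pY y) (hpY1 : ∑ y, pY y = 1) {K : ℝ} (hK : 0 ≤ K)
    {g : B → V → ℝ} (hg0 : ∀ y u, 0 ≤ g y u) (hg1 : ∀ y u, g y u ≤ 1) :
    ∃ (C : ι → V) (e : B → ι), ∑ y, pY y * g y (C (e y))
      ≤ ∑ u, ∑ y, pU u * Φ u y * g y u
        + 2 * ∑ u, ∑ y, (if K * pY y < Φ u y then pU u * Φ u y else 0)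
        + √(K / Fintype.card ι) := by
  set k : ℝ := (Fintype.card ι : ℝ)
  set F : (ι → V) → ℝ := fun C =>
    ∑ y, (|pY y - k⁻¹ * ∑ i, Φ (C i) y| + k⁻¹ * ∑ i, Φ (C i) y * g y (C i))
  have hideal : ∑ C : ι → V, (∏ i, pU (C i)) * ∑ y, k⁻¹ * ∑ i, Φ (C i) y * g y (C i)
      = ∑ u, ∑ y, pU u * Φ u y * g y u := by
    rw [sum_mul_sum_eq_sum_sum_mul]
    refine (sum_congr rfl fun y _ => ?_).trans sum_comm
    simp only [mul_assoc]
    exact sum_pi_prod_mul_avg hpU.2 fun u => Φ u y * g y u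
  have hexp : ∑ C : ι → V, (∏ i, pU (C i)) * F C
      ≤ ∑ u, ∑ y, pU u * Φ u y * g y u
        + 2 * ∑ u, ∑ y, (if K * pY y < Φ u y then pU u * Φ u y else 0) + √(K / k) := by
    simp only [F, sum_add_distrib, mul_add, hideal]
    linarith [soft_covering (ι := ι) hpU hΦ hpY hpY1 hK]
  obtain ⟨C, hC⟩ := exists_le_sum_mul (pi_prod_mem_stdSimplex hpU) F
  choose e he using fun y => exists_mul_le_abs_sub_add_avg_mul (fun i => hΦ (C i) y)
    (fun i => hg0 y (C i)) (fun i => hg1 y (C i)) (pY y)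
  exact ⟨C, e, (sum_le_sum fun y _ => he y).trans (hC.trans hexp)⟩

end Covering

/-- `(X, Y)` has law `P` and `U` is drawn from `Y` through the test channel `W`, so that
`X → Y → U` is a Markov chain. -/
structure MarkovTriple (A B V : Type*) [Fintype A] [Fintype B] [Fintype V] where
  P : A × B → ℝ
  W : B → V → ℝ
  P_mem : P ∈ stdSimplex ℝ (A × B)
  W_mem : ∀ y, W y ∈ stdSimplex ℝ V

namespace MarkovTriple

variable {A B V : Type*} [Fintype A] [Fintype B] [Fintype V] (S : MarkovTriple A B V)

def pY (y : B) : ℝ := ∑ x, S.P (x, y)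

def pU (u : V) : ℝ := ∑ y, S.pY y * S.W y u

def pXU (p : A × V) : ℝ := ∑ y, S.P (p.1, y) * S.W y p.2

def pYU (p : B × V) : ℝ := S.pY p.1 * S.W p.1 p.2

-- Since `x / 0 = 0`, a conditional pmf vanishes off the support of the conditioning variable.
noncomputable def pXgY (x : A) (y : B) : ℝ := S.P (x, y) / S.pY y

noncomputable def pXgU (x : A) (u : V) : ℝ := S.pXU (x, u) / S.pU u

noncomputable def pYgU (y : B) (u : V) : ℝ := S.pYU (y, u) / S.pU u

noncomputable def entropyXGivenU : ℝ := -∑ p, S.pXU p * logb 2 (S.pXU p / S.pU p.2)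

noncomputable def mutualInfoYU : ℝ :=
  ∑ p, S.pYU p * logb 2 (S.pYU p / (S.pY p.1 * S.pU p.2))

theorem P_le_pY (x : A) (y : B) : S.P (x, y) ≤ S.pY y :=
  single_le_sum (f := fun x => S.P (x, y)) (fun _ _ => S.P_mem.1 _) (mem_univ x)

theorem pY_nonneg (y : B) : 0 ≤ S.pY y := sum_nonneg fun _ _ => S.P_mem.1 _

theorem sum_pY : ∑ y, S.pY y = 1 := by
  rw [← S.P_mem.2, Fintype.sum_prod_type, sum_comm]
  rfl

theorem pYU_nonneg (p : B × V) : 0 ≤ S.pYU p := mul_nonneg (S.pY_nonneg _) ((S.W_mem _).1 _)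

theorem sum_pYU_snd (y : B) : ∑ u, S.pYU (y, u) = S.pY y := by
  simp only [pYU, ← mul_sum, (S.W_mem y).2, mul_one]

theorem pYU_mem : S.pYU ∈ stdSimplex ℝ (B × V) :=
  ⟨S.pYU_nonneg, by simp only [Fintype.sum_prod_type, sum_pYU_snd, sum_pY]⟩

theorem pU_mem : S.pU ∈ stdSimplex ℝ V := by
  refine ⟨fun u => sum_nonneg fun y _ => S.pYU_nonneg (y, u), ?_⟩
  have := S.pYU_mem.2
  rwa [Fintype.sum_prod_type, sum_comm] at this

theorem pYU_le_pU (y : B) (u : V) : S.pYU (y, u) ≤ S.pU u :=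
  single_le_sum (f := fun y => S.pYU (y, u)) (fun _ _ => S.pYU_nonneg _) (mem_univ y)

theorem pY_pos_of_pYU_pos {y : B} {u : V} (h : 0 < S.pYU (y, u)) : 0 < S.pY y :=
  (S.pY_nonneg y).lt_of_ne fun h0 => by simp [pYU, ← h0] at h

theorem pU_pos_of_pYU_pos {y : B} {u : V} (h : 0 < S.pYU (y, u)) : 0 < S.pU u :=
  h.trans_le (S.pYU_le_pU y u)

theorem pXU_nonneg (p : A × V) : 0 ≤ S.pXU p :=
  sum_nonneg fun _ _ => mul_nonneg (S.P_mem.1 _) ((S.W_mem _).1 _)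

theorem sum_pXU_fst (u : V) : ∑ x, S.pXU (x, u) = S.pU u := by
  simp only [pXU, pU, pY, sum_mul]
  exact sum_comm

theorem pXU_le_pU (x : A) (u : V) : S.pXU (x, u) ≤ S.pU u :=
  S.sum_pXU_fst u ▸ single_le_sum (f := fun x => S.pXU (x, u)) (fun _ _ => S.pXU_nonneg _)
    (mem_univ x)

theorem pXU_mem : S.pXU ∈ stdSimplex ℝ (A × V) :=
  ⟨S.pXU_nonneg, by rw [Fintype.sum_prod_type, sum_comm]; simp only [sum_pXU_fst, S.pU_mem.2]⟩

theorem pXgY_nonneg (x : A) (y : B) : 0 ≤ S.pXgY x y := div_nonneg (S.P_mem.1 _) (S.pY_nonneg y)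

theorem pY_mul_pXgY (x : A) (y : B) : S.pY y * S.pXgY x y = S.P (x, y) :=
  mul_div_cancel_of_imp' fun h => le_antisymm (h ▸ S.P_le_pY x y) (S.P_mem.1 _)

theorem sum_pXgY_le_one (y : B) : ∑ x, S.pXgY x y ≤ 1 := by
  simp only [pXgY, ← sum_div]
  exact div_self_le_one (S.pY y)

theorem sum_pXgU_le_one (u : V) : ∑ x, S.pXgU x u ≤ 1 := by
  simp only [pXgU, ← sum_div, sum_pXU_fst]
  exact div_self_le_one _

theorem pYgU_nonneg (y : B) (u : V) : 0 ≤ S.pYgU y u :=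
  div_nonneg (S.pYU_nonneg _) (S.pU_mem.1 u)

theorem pU_mul_pYgU (y : B) (u : V) : S.pU u * S.pYgU y u = S.pYU (y, u) :=
  mul_div_cancel_of_imp' fun h => le_antisymm (h ▸ S.pYU_le_pU y u) (S.pYU_nonneg _)

theorem card_filter_le_pXgU_le {L : ℝ} (hL : 0 < L) (u : V) :
    ((univ.filter fun x => L⁻¹ ≤ S.pXgU x u).card : ℝ) ≤ L := by
  have hmass : ∑ _x ∈ univ.filter fun x => L⁻¹ ≤ S.pXgU x u, L⁻¹ ≤ 1 :=
    calc ∑ _x ∈ univ.filter fun x => L⁻¹ ≤ S.pXgU x u, L⁻¹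
        ≤ ∑ x ∈ univ.filter fun x => L⁻¹ ≤ S.pXgU x u, S.pXgU x u :=
          sum_le_sum fun x hx => (mem_filter.mp hx).2
      _ ≤ ∑ x, S.pXgU x u := sum_le_sum_of_subset_of_nonneg (subset_univ _) fun x _ _ =>
          div_nonneg (S.pXU_nonneg _) (S.pU_mem.1 u)
      _ ≤ 1 := S.sum_pXgU_le_one u
  rwa [sum_const, nsmul_eq_mul, ← div_eq_mul_inv, div_le_one hL] at hmass

theorem sum_pYU_mul_sum_ite_pXgY (T : A → V → Prop) :
    ∑ u, ∑ y, S.pYU (y, u) * ∑ x, (if T x u then S.pXgY x y else 0)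
      = ∑ p, if T p.1 p.2 then S.pXU p else 0 := by
  rw [Fintype.sum_prod_type]
  refine (sum_congr rfl fun u _ => ?_).trans sum_comm
  simp only [mul_sum, mul_ite, mul_zero]
  rw [sum_comm]
  refine sum_congr rfl fun x _ => ?_
  by_cases hT : T x u
  · simp only [hT, if_true, pXU, pYU]
    refine sum_congr rfl fun y _ => ?_
    rw [mul_right_comm, pY_mul_pXgY, mul_comm]
  · simp [hT]

theorem sum_ite_lt_pYgU_eq (K : ℝ) :
    ∑ u, ∑ y, (if K * S.pY y < S.pYgU y u then S.pU u * S.pYgU y u else 0)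
      = ∑ p, if K < S.pYU p / (S.pY p.1 * S.pU p.2) then S.pYU p else 0 := by
  rw [Fintype.sum_prod_type, sum_comm]
  refine sum_congr rfl fun y _ => sum_congr rfl fun u _ => ?_
  rw [pU_mul_pYgU]
  rcases (S.pYU_nonneg (y, u)).eq_or_lt with h0 | hpos
  · simp [← h0]
  · have hpY := S.pY_pos_of_pYU_pos hpos
    have hpU := S.pU_pos_of_pYU_pos hpos
    have hiff : K * S.pY y < S.pYgU y u ↔ K < S.pYU (y, u) / (S.pY y * S.pU u) := by
      rw [pYgU, lt_div_iff₀ hpU, lt_div_iff₀ (mul_pos hpY hpU), mul_assoc]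
    simp only [hiff]

theorem exists_code_error_le [DecidableEq A] {β ι : Type*} [Fintype β] [Nonempty β] [Fintype ι]
    [DecidableEq ι] [Nonempty ι] {L K : ℝ} (hL : 0 < L) (hK : 0 ≤ K) :
    ∃ (e₁ : A → β) (e₂ : B → ι) (d : β × ι → A),
      ∑ x, ∑ y, (if d (e₁ x, e₂ y) ≠ x then S.P (x, y) else 0)
        ≤ ∑ p, (if S.pXgU p.1 p.2 < L⁻¹ then S.pXU p else 0) + L / Fintype.card β
          + 2 * ∑ p, (if K < S.pYU p / (S.pY p.1 * S.pU p.2) then S.pYU p else 0)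
          + √(K / Fintype.card ι) := by
  have : Nonempty A := by
    by_contra h
    rw [not_nonempty_iff] at h
    simpa using S.P_mem.2
  set list : V → Finset A := fun u => univ.filter fun x => L⁻¹ ≤ S.pXgU x u
  set g : B → V → ℝ := fun y u => ∑ x, if x ∉ list u then S.pXgY x y else 0
  have hg0 : ∀ y u, 0 ≤ g y u := fun y u =>
    sum_nonneg fun x _ => by split_ifs; exacts [le_rfl, S.pXgY_nonneg x y]
  have hg1 : ∀ y u, g y u ≤ 1 := fun y u =>
    (sum_le_sum fun x _ => by split_ifs; exacts [S.pXgY_nonneg x y, le_rfl]).trans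
      (S.sum_pXgY_le_one y)
  obtain ⟨C, e₂, hcover⟩ := exists_codebook_encoder_le (ι := ι) (Φ := fun u y => S.pYgU y u)
    S.pU_mem (fun u y => S.pYgU_nonneg y u)
    (fun y => by simp only [pU_mul_pYgU, sum_pYU_snd]) S.sum_pY hK hg0 hg1
  obtain ⟨e₁, d, hbin⟩ := exists_bin_decoder_error_le (β := β) S.P_mem e₂ (fun i => list (C i))
    fun i => S.card_filter_le_pXgU_le hL (C i)
  have hmissed : ∑ x, ∑ y, (if x ∉ list (C (e₂ y)) then S.P (x, y) else 0)
      = ∑ y, S.pY y * g y (C (e₂ y)) := by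
    simp only [g, mul_sum, mul_ite, mul_zero, pY_mul_pXgY]
    exact sum_comm
  have hideal : ∑ u, ∑ y, S.pU u * S.pYgU y u * g y u
      = ∑ p, (if S.pXgU p.1 p.2 < L⁻¹ then S.pXU p else 0) := by
    simp only [pU_mul_pYgU, g, sum_pYU_mul_sum_ite_pXgY, list, mem_filter, mem_univ, true_and,
      not_le]
  refine ⟨e₁, e₂, d, hbin.trans ?_⟩
  rw [hmissed, ← hideal, ← sum_ite_lt_pYgU_eq]
  linarith

end MarkovTriple

theorem sum_prod_arrow_eq_sum_arrow_prod {ι α β : Type*} [Fintype ι] [DecidableEq ι] [Fintype α]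
    [Fintype β] (F : (ι → α × β) → ℝ) :
    ∑ p : (ι → α) × (ι → β), F (fun i => (p.1 i, p.2 i)) = ∑ c, F c :=
  (Equiv.arrowProdEquivProdArrow ι (fun _ => α) (fun _ => β)).symm.sum_comp F

namespace MarkovTriple

variable {A B V : Type*} [Fintype A] [Fintype B] [Fintype V] (S : MarkovTriple A B V)

/-- The memoryless extension: `n` independent copies of `(X, Y, U)`. -/
def pow (n : ℕ) : MarkovTriple (Fin n → A) (Fin n → B) (Fin n → V) where
  P p := ∏ i, S.P (p.1 i, p.2 i)
  W y u := ∏ i, S.W (y i) (u i)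
  P_mem := ⟨fun _ => prod_nonneg fun _ _ => S.P_mem.1 _,
    (sum_prod_arrow_eq_sum_arrow_prod fun c => ∏ i, S.P (c i)).trans (sum_pi_prod S.P_mem.2)⟩
  W_mem y := ⟨fun _ => prod_nonneg fun _ _ => (S.W_mem _).1 _,
    (Fintype.prod_sum fun i u => S.W (y i) u).symm.trans (prod_eq_one fun _ _ => (S.W_mem _).2)⟩

variable {n : ℕ}

theorem pow_P (p : (Fin n → A) × (Fin n → B)) : (S.pow n).P p = ∏ i, S.P (p.1 i, p.2 i) := rfl

theorem pow_W (y : Fin n → B) (u : Fin n → V) : (S.pow n).W y u = ∏ i, S.W (y i) (u i) := rfl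

theorem pow_pY (y : Fin n → B) : (S.pow n).pY y = ∏ i, S.pY (y i) :=
  (Fintype.prod_sum fun i x => S.P (x, y i)).symm

theorem pow_pU (u : Fin n → V) : (S.pow n).pU u = ∏ i, S.pU (u i) := by
  simp only [pU, pow_pY, pow_W, ← prod_mul_distrib]
  exact (Fintype.prod_sum fun i y => S.pY y * S.W y (u i)).symm

theorem pow_pXU (p : (Fin n → A) × (Fin n → V)) :
    (S.pow n).pXU p = ∏ i, S.pXU (p.1 i, p.2 i) := by
  simp only [pXU, pow_P, pow_W, ← prod_mul_distrib]
  exact (Fintype.prod_sum fun i y => S.P (p.1 i, y) * S.W y (p.2 i)).symm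

theorem pow_pYU (p : (Fin n → B) × (Fin n → V)) :
    (S.pow n).pYU p = ∏ i, S.pYU (p.1 i, p.2 i) := by
  simp only [pYU, pow_pY, pow_W, ← prod_mul_distrib]

theorem exists_pow_entropy_spectrum_le {a : ℝ} (ha : S.entropyXGivenU < a) :
    ∃ c, ∀ n : ℕ, 0 < n → ∑ p, (if (S.pow n).pXgU p.1 p.2 < (2 ^ (n * a))⁻¹
      then (S.pow n).pXU p else 0) ≤ c / n := by
  have hr : ∀ p, 0 < S.pXU p → 0 < S.pXU p / S.pU p.2 := fun p hp =>
    div_pos hp (hp.trans_le (S.pXU_le_pU _ _))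
  obtain ⟨c, hc⟩ := exists_sum_pi_ite_prod_lt_le S.pXU_mem hr (a := -a)
    (by rw [entropyXGivenU] at ha; linarith)
  refine ⟨c, fun n hn => (le_of_eq ?_).trans (hc n hn)⟩
  rw [← sum_prod_arrow_eq_sum_arrow_prod]
  refine sum_congr rfl fun p _ => ?_
  simp only [pXgU, pow_pXU, pow_pU, ← prod_div_distrib, mul_neg, rpow_neg two_pos.le]

theorem exists_pow_information_spectrum_le {a : ℝ} (ha : S.mutualInfoYU < a) :
    ∃ c, ∀ n : ℕ, 0 < n → ∑ p, (if (2 : ℝ) ^ (n * a) < (S.pow n).pYU p /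
      ((S.pow n).pY p.1 * (S.pow n).pU p.2) then (S.pow n).pYU p else 0) ≤ c / n := by
  have hr : ∀ p, 0 < S.pYU p → 0 < S.pYU p / (S.pY p.1 * S.pU p.2) := fun p hp =>
    div_pos hp (mul_pos (S.pY_pos_of_pYU_pos hp) (S.pU_pos_of_pYU_pos hp))
  obtain ⟨c, hc⟩ := exists_sum_pi_ite_lt_prod_le S.pYU_mem hr ha
  refine ⟨c, fun n hn => (le_of_eq ?_).trans (hc n hn)⟩
  rw [← sum_prod_arrow_eq_sum_arrow_prod]
  refine sum_congr rfl fun p _ => ?_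
  simp only [pow_pYU, pow_pY, pow_pU, ← prod_mul_distrib, ← prod_div_distrib]

theorem exists_pow_code_error_le {a₁ a₂ : ℝ} (h₁ : S.entropyXGivenU < a₁)
    (h₂ : S.mutualInfoYU < a₂) :
    ∃ c, ∀ n M₁ M₂ : ℕ, 0 < n → 0 < M₁ → 0 < M₂ →
      ∃ (e₁ : (Fin n → A) → Fin M₁) (e₂ : (Fin n → B) → Fin M₂)
        (d : Fin M₁ × Fin M₂ → (Fin n → A)),
        ∑ x, ∑ y, (if d (e₁ x, e₂ y) ≠ x then (S.pow n).P (x, y) else 0)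
          ≤ c / n + 2 ^ (n * a₁) / M₁ + √(2 ^ (n * a₂) / M₂) := by
  obtain ⟨c₁, hc₁⟩ := S.exists_pow_entropy_spectrum_le h₁
  obtain ⟨c₂, hc₂⟩ := S.exists_pow_information_spectrum_le h₂
  refine ⟨c₁ + 2 * c₂, fun n M₁ M₂ hn hM₁ hM₂ => ?_⟩
  have := Fin.pos_iff_nonempty.mp hM₁
  have := Fin.pos_iff_nonempty.mp hM₂
  obtain ⟨e₁, e₂, d, herr⟩ := (S.pow n).exists_code_error_le (β := Fin M₁) (ι := Fin M₂)
    (rpow_pos_of_pos two_pos (n * a₁)) (rpow_nonneg two_pos.le (n * a₂))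
  refine ⟨e₁, e₂, d, herr.trans ?_⟩
  simp only [Fintype.card_fin]
  have hspec₁ := hc₁ n hn
  have hspec₂ := hc₂ n hn
  rw [add_div, mul_div_assoc]
  linarith

end MarkovTriple

theorem tendsto_two_rpow_div_ceil {a R : ℝ} (h : a < R) :
    Tendsto (fun n : ℕ => (2 : ℝ) ^ (n * a) / ⌈(2 : ℝ) ^ (n * R)⌉₊) atTop (𝓝 0) := by
  have hgeo : Tendsto (fun n : ℕ => ((2 : ℝ) ^ (a - R)) ^ n) atTop (𝓝 0) :=
    tendsto_pow_atTop_nhds_zero_of_lt_one (by positivity)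
      (rpow_lt_one_of_one_lt_of_neg one_lt_two (sub_neg.mpr h))
  refine squeeze_zero (fun n => by positivity) (fun n => ?_) hgeo
  calc (2 : ℝ) ^ (n * a) / ⌈(2 : ℝ) ^ (n * R)⌉₊ ≤ 2 ^ (n * a) / 2 ^ (n * R) :=
        div_le_div_of_nonneg_left (by positivity) (by positivity) (Nat.le_ceil _)
    _ = ((2 : ℝ) ^ (a - R)) ^ n := by
        rw [← rpow_natCast, ← rpow_mul two_pos.le, ← rpow_sub two_pos]
        ring_nf

/-- Wyner's rate region is asymptotically achievable.  For the Markov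
chain `X → Y → U` induced by a conditional pmf `P_{U|Y}`, any rate pair `(R₁, R₂)` with
`R₁ > H(X|U)` and `R₂ > I(Y;U)` is asymptotically achievable for source coding of `X`
with coded side information `Y` at the decoder. -/
theorem wyner_region_asymptotically_achievable
    {X Y U : Type*} [Fintype X] [Fintype Y] [Fintype U]
    (PXY : X × Y → ℝ)
    (hP0 : ∀ p, 0 ≤ PXY p) (hP1 : ∑ p, PXY p = 1)
    (PUgY : Y → U → ℝ)
    (hU0 : ∀ y u, 0 ≤ PUgY y u) (hU1 : ∀ y, ∑ u, PUgY y u = 1)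
    (PY : Y → ℝ) (hPY : ∀ y, PY y = ∑ x, PXY (x, y))
    (PU : U → ℝ) (hPU : ∀ u, PU u = ∑ y, PY y * PUgY y u)
    (PXU : X × U → ℝ) (hPXU : ∀ x u, PXU (x, u) = ∑ y, PXY (x, y) * PUgY y u)
    (PYU : Y × U → ℝ) (hPYU : ∀ y u, PYU (y, u) = PY y * PUgY y u)
    (HXgU : ℝ) (hH : HXgU = -∑ p : X × U, PXU p * Real.logb 2 (PXU p / PU p.2))
    (IYU : ℝ) (hI : IYU = ∑ p : Y × U, PYU p * Real.logb 2 (PYU p / (PY p.1 * PU p.2)))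
    (R₁ R₂ : ℝ) (hR₁ : HXgU < R₁) (hR₂ : IYU < R₂)
    (ε : ℝ) (hε : 0 < ε) :
    ∃ N : ℕ, ∀ n ≥ N,
      ∃ (e₁ : (Fin n → X) → Fin ⌈(2 : ℝ) ^ (n * R₁)⌉₊)
        (e₂ : (Fin n → Y) → Fin ⌈(2 : ℝ) ^ (n * R₂)⌉₊)
        (d : Fin ⌈(2 : ℝ) ^ (n * R₁)⌉₊ × Fin ⌈(2 : ℝ) ^ (n * R₂)⌉₊ → (Fin n → X)),
        ∑ x : Fin n → X, ∑ y : Fin n → Y,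
          (if d (e₁ x, e₂ y) ≠ x then ∏ i, PXY (x i, y i) else 0) ≤ ε := by
  set S : MarkovTriple X Y U := ⟨PXY, PUgY, ⟨hP0, hP1⟩, fun y => ⟨hU0 y, hU1 y⟩⟩
  obtain rfl : PY = S.pY := funext hPY
  obtain rfl : PU = S.pU := funext hPU
  obtain rfl : PXU = S.pXU := funext fun p => hPXU p.1 p.2
  obtain rfl : PYU = S.pYU := funext fun p => hPYU p.1 p.2
  subst hH hI
  obtain ⟨a₁, hHa₁, ha₁⟩ := exists_between hR₁
  obtain ⟨a₂, hIa₂, ha₂⟩ := exists_between hR₂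
  obtain ⟨c, hc⟩ := S.exists_pow_code_error_le hHa₁ hIa₂
  have hbound : Tendsto (fun n : ℕ => c / n + 2 ^ (n * a₁) / ⌈(2 : ℝ) ^ (n * R₁)⌉₊
      + √(2 ^ (n * a₂) / ⌈(2 : ℝ) ^ (n * R₂)⌉₊)) atTop (𝓝 0) := by
    simpa using ((tendsto_const_div_atTop_nhds_zero_nat c).add
      (tendsto_two_rpow_div_ceil ha₁)).add (tendsto_two_rpow_div_ceil ha₂).sqrt
  obtain ⟨N, hN⟩ := eventually_atTop.mp
    ((hbound.eventually (gt_mem_nhds hε)).and (eventually_gt_atTop 0))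
  refine ⟨N, fun n hn => ?_⟩
  obtain ⟨e₁, e₂, d, herr⟩ := hc n ⌈(2 : ℝ) ^ (n * R₁)⌉₊ ⌈(2 : ℝ) ^ (n * R₂)⌉₊ (hN n hn).2
    (Nat.ceil_pos.mpr (by positivity)) (Nat.ceil_pos.mpr (by positivity))
  exact ⟨e₁, e₂, d, herr.trans (hN n hn).1.le⟩
end
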